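/- For any 3-qubit density matrix ρ, the three-body sector length satisfies A_3(ρ) ≤ 4, with equality attained by the GHZ state (|000⟩+|111⟩)/√2. -/

import Mathlib

open Matrix BigOperators Finset ComplexOrder

/-- The Pauli matrices, indexed by `Fin 4`: identity, X, Y, Z. -/
noncomputable def pauli : Fin 4 → Matrix (Fin 2) (Fin 2) ℂ
  | 0 => 1
  | 1 => !![0, 1; 1, 0]
  | 2 => !![0, -Complex.I; Complex.I, 0]
  | 3 => !![1, 0; 0, -1]

/-- An `n`-qubit Pauli word: the tensor product of the Pauli matrices `pauli (w i)`,
realized as a matrix indexed by `Fin n → Fin 2`. -/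
noncomputable def pWord {n : ℕ} (w : Fin n → Fin 4) :
    Matrix (Fin n → Fin 2) (Fin n → Fin 2) ℂ :=
  Matrix.of fun x y => ∏ i, pauli (w i) (x i) (y i)

/-- The weight of a Pauli word: the number of non-identity tensor factors. -/
def wt {n : ℕ} (w : Fin n → Fin 4) : ℕ :=
  (Finset.univ.filter fun i => w i ≠ 0).card

/-- The `k`-th sector length of an `n`-qubit matrix:
the sum of squared Pauli expectation values over Pauli words of weight `k`. -/
noncomputable def sector (n k : ℕ) (ρ : Matrix (Fin n → Fin 2) (Fin n → Fin 2) ℂ) : ℝ :=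
  ∑ w ∈ Finset.univ.filter fun w : Fin n → Fin 4 => wt w = k,
    ((pWord w * ρ).trace.re) ^ 2

/-- An `n`-qubit quantum state: positive semidefinite with unit trace. -/
def IsState {n : ℕ} (ρ : Matrix (Fin n → Fin 2) (Fin n → Fin 2) ℂ) : Prop :=
  ρ.PosSemidef ∧ ρ.trace = 1

/-- The outer product `|ψ⟩⟨ψ|` of a vector with itself. -/
noncomputable def outer {n : ℕ} (ψ : (Fin n → Fin 2) → ℂ) :
    Matrix (Fin n → Fin 2) (Fin n → Fin 2) ℂ :=
  Matrix.of fun x y => ψ x * (starRingEnd ℂ) (ψ y)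

/-- The three-qubit GHZ state vector `(|000⟩ + |111⟩)/√2`. -/
noncomputable def ghzVec : (Fin 3 → Fin 2) → ℂ := fun x =>
  if x = (fun _ => 0) then (Real.sqrt 2 : ℂ)⁻¹
  else if x = (fun _ => 1) then (Real.sqrt 2 : ℂ)⁻¹ else 0

/-!
In the Pauli basis, `2ⁿ Tr ρ² = ∑ₖ Aₖ(ρ)`, so purity gives `1 + A₁ + A₂ + A₃ ≤ 8`. The spin flip
`ρ̃ = Y⊗Y⊗Y ρ̄ Y⊗Y⊗Y` is again positive semidefinite and multiplies the expectation of a Pauli word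
of weight `k` by `(-1)ᵏ`, so `0 ≤ Tr (ρ ρ̃)` gives `1 - A₁ + A₂ - A₃ ≥ 0`. Subtracting the two,
`A₃ ≤ 4 - A₁ ≤ 4`. For the GHZ state the weight-three words with nonzero expectation are `XXX`,
`XYY`, `YXY` and `YYX`, each with expectation `±1`.
-/

namespace Matrix

variable {ι α R : Type*} [Fintype ι]

def piKronecker [CommSemiring R] (f : ι → Matrix α α R) : Matrix (ι → α) (ι → α) R :=
  of fun x y => ∏ i, f i (x i) (y i)

section CommSemiring

variable [CommSemiring R]

theorem piKronecker_mul [Fintype α] [DecidableEq ι] (f g : ι → Matrix α α R) :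
    piKronecker f * piKronecker g = piKronecker (f * g) := by
  ext x y
  simp only [piKronecker, mul_apply, of_apply, Pi.mul_apply, prod_univ_sum, Fintype.piFinset_univ,
    prod_mul_distrib]

theorem piKronecker_one [DecidableEq α] : piKronecker (1 : ι → Matrix α α R) = 1 := by
  ext x y
  simp [piKronecker, one_apply, prod_boole, funext_iff]

theorem piKronecker_smul (c : ι → R) (f : ι → Matrix α α R) :
    piKronecker (fun i => c i • f i) = (∏ i, c i) • piKronecker f := by
  ext x y
  simp only [piKronecker, of_apply, smul_apply, smul_eq_mul, prod_mul_distrib]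

theorem piKronecker_transpose (f : ι → Matrix α α R) :
    piKronecker (fun i => (f i)ᵀ) = (piKronecker f)ᵀ :=
  rfl

theorem piKronecker_conjTranspose [StarRing R] (f : ι → Matrix α α R) :
    piKronecker (fun i => (f i)ᴴ) = (piKronecker f)ᴴ := by
  ext x y
  simp only [piKronecker, of_apply, conjTranspose_apply, star_prod]

theorem sum_piKronecker_mul_piKronecker {β : Type*} [Fintype β] [DecidableEq ι]
    (f : β → Matrix α α R) (x y u v : ι → α) :
    ∑ w : ι → β, piKronecker (f ∘ w) x y * piKronecker (f ∘ w) u v =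
      ∏ i, ∑ b, f b (x i) (y i) * f b (u i) (v i) := by
  simp only [piKronecker, of_apply, Function.comp_apply, ← prod_mul_distrib, prod_univ_sum,
    Fintype.piFinset_univ]

end CommSemiring

variable {m 𝕜 : Type*} [Fintype m] [RCLike 𝕜] {A B : Matrix m m 𝕜}

theorem IsHermitian.trace_mul_self [DecidableEq m] (hA : A.IsHermitian) :
    (A * A).trace = ∑ i, (hA.eigenvalues i : 𝕜) ^ 2 := by
  conv_lhs => rw [hA.spectral_theorem, ← map_mul, Unitary.conjStarAlgAut_apply, trace_mul_cycle,
    Unitary.coe_star_mul_self, one_mul, diagonal_mul_diagonal, trace_diagonal]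
  simp only [Function.comp_apply, sq]

theorem PosSemidef.re_trace_mul_self_le (hA : A.PosSemidef) :
    RCLike.re (A * A).trace ≤ RCLike.re A.trace ^ 2 := by
  classical
  rw [hA.isHermitian.trace_mul_self, hA.isHermitian.trace_eq_sum_eigenvalues]
  simp only [← RCLike.ofReal_pow, ← RCLike.ofReal_sum, RCLike.ofReal_re]
  exact sum_sq_le_sq_sum_of_nonneg fun i _ => hA.eigenvalues_nonneg i

open scoped MatrixOrder in
theorem PosSemidef.trace_mul_nonneg (hA : A.PosSemidef) (hB : B.PosSemidef) :
    0 ≤ (A * B).trace := by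
  classical
  set S := CFC.sqrt A
  have hSS : S * S = A := CFC.sqrt_mul_sqrt_self A hA.nonneg
  have hS : Sᴴ = S := (CFC.sqrt_nonneg A).posSemidef.isHermitian.eq
  rw [← hSS, mul_assoc, trace_mul_comm]
  simpa only [hS] using (hB.mul_mul_conjTranspose_same S).trace_nonneg

theorem IsHermitian.im_trace_mul_eq_zero (hA : A.IsHermitian) (hB : B.IsHermitian) :
    RCLike.im (A * B).trace = 0 := by
  rw [← RCLike.conj_eq_iff_im, starRingEnd_apply, ← trace_conjTranspose, conjTranspose_mul, hA.eq,
    hB.eq, trace_mul_comm]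

end Matrix

theorem pauli_isHermitian (k : Fin 4) : (pauli k).IsHermitian := by
  ext a b
  fin_cases k <;> fin_cases a <;> fin_cases b <;> simp [pauli]

theorem sum_pauli_mul_pauli (a b c d : Fin 2) :
    ∑ k, pauli k a b * pauli k c d = if a = d ∧ b = c then 2 else 0 := by
  fin_cases a <;> fin_cases b <;> fin_cases c <;> fin_cases d <;>
    norm_num [pauli, Fin.sum_univ_four]

theorem pauli_two_mul_mul_pauli_two (k : Fin 4) :
    pauli 2 * pauli k * pauli 2 = (if k = 0 then 1 else -1 : ℂ) • (pauli k)ᵀ := by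
  ext a b
  fin_cases k <;> fin_cases a <;> fin_cases b <;> simp [pauli, mul_apply, Fin.sum_univ_two]

section PauliWord

variable {n : ℕ}

theorem pWord_eq_piKronecker (w : Fin n → Fin 4) : pWord w = piKronecker (pauli ∘ w) :=
  rfl

theorem pWord_isHermitian (w : Fin n → Fin 4) : (pWord w).IsHermitian := by
  rw [IsHermitian, pWord_eq_piKronecker, ← piKronecker_conjTranspose]
  exact congrArg piKronecker (funext fun i => (pauli_isHermitian (w i)).eq)

theorem pWord_zero : pWord (0 : Fin n → Fin 4) = 1 :=
  piKronecker_one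

theorem sum_pWord_mul_pWord (x y u v : Fin n → Fin 2) :
    ∑ w : Fin n → Fin 4, pWord w x y * pWord w u v = if x = v ∧ y = u then 2 ^ n else 0 := by
  simp only [pWord_eq_piKronecker, sum_piKronecker_mul_piKronecker, sum_pauli_mul_pauli,
    prod_ite_zero, prod_const, card_univ, Fintype.card_fin, mem_univ, true_implies, forall_and,
    funext_iff]

theorem sum_trace_pWord_mul_mul_trace_pWord_mul
    (M N : Matrix (Fin n → Fin 2) (Fin n → Fin 2) ℂ) :
    ∑ w : Fin n → Fin 4, (pWord w * M).trace * (pWord w * N).trace = 2 ^ n * (M * N).trace := by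
  have hterm : ∀ w : Fin n → Fin 4, (pWord w * M).trace * (pWord w * N).trace =
      ∑ x, ∑ u, ∑ v, ∑ y, pWord w x y * pWord w u v * (M y x * N v u) := by
    intro w
    rw [trace, trace, sum_mul_sum]
    simp only [Matrix.diag, mul_apply, sum_mul, mul_sum]
    refine sum_congr rfl fun x _ => sum_congr rfl fun u _ => sum_congr rfl fun v _ =>
      sum_congr rfl fun y _ => by ring
  calc ∑ w : Fin n → Fin 4, (pWord w * M).trace * (pWord w * N).trace
      = ∑ x, ∑ u, ∑ v, ∑ y,
          (∑ w : Fin n → Fin 4, pWord w x y * pWord w u v) * (M y x * N v u) := by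
        simp only [hterm, sum_mul]
        rw [sum_comm]; refine sum_congr rfl fun x _ => ?_
        rw [sum_comm]; refine sum_congr rfl fun u _ => ?_
        rw [sum_comm]; refine sum_congr rfl fun v _ => ?_
        rw [sum_comm]
    _ = 2 ^ n * (M * N).trace := by
        simp only [sum_pWord_mul_pWord, ite_and, ite_mul, zero_mul, sum_ite_irrel, sum_ite_eq',
          mem_univ, ↓reduceIte, sum_const_zero, sum_ite_eq, trace, diag_apply, mul_apply, mul_sum]
        exact sum_comm

end PauliWord

section SpinFlip

variable {n : ℕ}

theorem neg_one_pow_wt {R : Type*} [CommRing R] (w : Fin n → Fin 4) :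
    (-1 : R) ^ wt w = ∏ i, if w i = 0 then 1 else -1 := by
  rw [prod_ite, prod_const_one, one_mul, prod_const, wt]

theorem pWord_two_mul_mul_pWord_two (w : Fin n → Fin 4) :
    pWord (fun _ => 2) * pWord w * pWord (fun _ => 2) = (-1 : ℂ) ^ wt w • (pWord w)ᵀ := by
  simp only [pWord_eq_piKronecker, piKronecker_mul, neg_one_pow_wt,
    ← piKronecker_transpose, ← piKronecker_smul]
  congr 1
  ext1 i
  exact pauli_two_mul_mul_pauli_two (w i)

/-- For Hermitian `ρ`, `ρᵀ` is the complex conjugate of `ρ`, so this is the spin flip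
`ρ̃ = Y^{⊗n} ρ̄ Y^{⊗n}`. -/
noncomputable def spinFlip (ρ : Matrix (Fin n → Fin 2) (Fin n → Fin 2) ℂ) :
    Matrix (Fin n → Fin 2) (Fin n → Fin 2) ℂ :=
  pWord (fun _ => 2) * ρᵀ * pWord (fun _ => 2)

theorem trace_pWord_mul_spinFlip (w : Fin n → Fin 4)
    (ρ : Matrix (Fin n → Fin 2) (Fin n → Fin 2) ℂ) :
    (pWord w * spinFlip ρ).trace = (-1) ^ wt w * (pWord w * ρ).trace := by
  rw [spinFlip, ← mul_assoc, ← mul_assoc, trace_mul_comm, ← mul_assoc, ← mul_assoc,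
    pWord_two_mul_mul_pWord_two, ← trace_transpose, transpose_mul, transpose_transpose,
    transpose_smul, transpose_transpose, Matrix.mul_smul, trace_smul, trace_mul_comm, smul_eq_mul]

theorem Matrix.PosSemidef.spinFlip {ρ : Matrix (Fin n → Fin 2) (Fin n → Fin 2) ℂ}
    (hρ : ρ.PosSemidef) :
    (spinFlip ρ).PosSemidef := by
  rw [_root_.spinFlip]
  simpa only [(pWord_isHermitian _).eq] using
    hρ.transpose.mul_mul_conjTranspose_same (pWord (fun _ : Fin n => (2 : Fin 4)))

end SpinFlip

section Sector

variable {n : ℕ}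

theorem wt_le (w : Fin n → Fin 4) : wt w ≤ n :=
  (card_filter_le _ _).trans_eq (card_fin n)

theorem wt_eq_zero_iff {w : Fin n → Fin 4} : wt w = 0 ↔ w = 0 := by
  simp [wt, filter_eq_empty_iff, funext_iff]

theorem sum_range_mul_sector (g : ℕ → ℝ) (ρ : Matrix (Fin n → Fin 2) (Fin n → Fin 2) ℂ) :
    ∑ k ∈ range (n + 1), g k * sector n k ρ =
      ∑ w : Fin n → Fin 4, g (wt w) * (pWord w * ρ).trace.re ^ 2 := by
  rw [← sum_fiberwise_of_maps_to fun w _ => mem_range_succ_iff.mpr (wt_le w)]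
  simp only [sector, mul_sum]
  refine sum_congr rfl fun k _ => sum_congr rfl fun w hw => ?_
  rw [(mem_filter.mp hw).2]

theorem sector_nonneg (k : ℕ) (ρ : Matrix (Fin n → Fin 2) (Fin n → Fin 2) ℂ) :
    0 ≤ sector n k ρ :=
  sum_nonneg fun _ _ => sq_nonneg _

theorem sector_zero {ρ : Matrix (Fin n → Fin 2) (Fin n → Fin 2) ℂ} (hρ : ρ.trace = 1) :
    sector n 0 ρ = 1 := by
  have hfilter : univ.filter (fun w : Fin n → Fin 4 => wt w = 0) = {0} := by
    ext w
    simp [wt_eq_zero_iff]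
  rw [sector, hfilter, sum_singleton, pWord_zero, one_mul, hρ, Complex.one_re, one_pow]

theorem sum_range_sector_eq {ρ : Matrix (Fin n → Fin 2) (Fin n → Fin 2) ℂ} (hρ : ρ.IsHermitian) :
    ∑ k ∈ range (n + 1), sector n k ρ = 2 ^ n * (ρ * ρ).trace.re := by
  calc ∑ k ∈ range (n + 1), sector n k ρ
      = ∑ w : Fin n → Fin 4, (pWord w * ρ).trace.re ^ 2 := by
        simpa only [one_mul] using sum_range_mul_sector (fun _ => 1) ρ
    _ = (∑ w : Fin n → Fin 4, (pWord w * ρ).trace * (pWord w * ρ).trace).re := by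
        rw [Complex.re_sum]
        refine sum_congr rfl fun w _ => ?_
        have him : (pWord w * ρ).trace.im = 0 := (pWord_isHermitian w).im_trace_mul_eq_zero hρ
        rw [Complex.mul_re, him, sq, mul_zero, sub_zero]
    _ = 2 ^ n * (ρ * ρ).trace.re := by
        rw [sum_trace_pWord_mul_mul_trace_pWord_mul, ← Complex.ofReal_ofNat, ← Complex.ofReal_pow,
          Complex.re_ofReal_mul]

theorem sum_range_neg_one_pow_mul_sector_eq {ρ : Matrix (Fin n → Fin 2) (Fin n → Fin 2) ℂ}
    (hρ : ρ.IsHermitian) :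
    ∑ k ∈ range (n + 1), (-1) ^ k * sector n k ρ = 2 ^ n * (ρ * spinFlip ρ).trace.re := by
  calc ∑ k ∈ range (n + 1), (-1) ^ k * sector n k ρ
      = ∑ w : Fin n → Fin 4, (-1) ^ wt w * (pWord w * ρ).trace.re ^ 2 :=
        sum_range_mul_sector _ ρ
    _ = (∑ w : Fin n → Fin 4, (pWord w * ρ).trace * (pWord w * spinFlip ρ).trace).re := by
        rw [Complex.re_sum]
        refine sum_congr rfl fun w _ => ?_
        have him : (pWord w * ρ).trace.im = 0 := (pWord_isHermitian w).im_trace_mul_eq_zero hρ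
        have hsign : (-1 : ℂ) ^ wt w = ((-1 : ℝ) ^ wt w : ℝ) := by norm_num
        rw [trace_pWord_mul_spinFlip, mul_left_comm, hsign, Complex.re_ofReal_mul, Complex.mul_re,
          him, sq, mul_zero, sub_zero]
    _ = 2 ^ n * (ρ * spinFlip ρ).trace.re := by
        rw [sum_trace_pWord_mul_mul_trace_pWord_mul, ← Complex.ofReal_ofNat, ← Complex.ofReal_pow,
          Complex.re_ofReal_mul]

theorem IsState.sum_range_sector_le {ρ : Matrix (Fin n → Fin 2) (Fin n → Fin 2) ℂ}
    (hρ : IsState ρ) : ∑ k ∈ range (n + 1), sector n k ρ ≤ 2 ^ n := by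
  have purity := hρ.1.re_trace_mul_self_le
  rw [hρ.2] at purity
  rw [sum_range_sector_eq hρ.1.isHermitian]
  simpa using purity

theorem IsState.sum_range_neg_one_pow_mul_sector_nonneg
    {ρ : Matrix (Fin n → Fin 2) (Fin n → Fin 2) ℂ} (hρ : IsState ρ) :
    0 ≤ ∑ k ∈ range (n + 1), (-1) ^ k * sector n k ρ := by
  rw [sum_range_neg_one_pow_mul_sector_eq hρ.1.isHermitian]
  exact mul_nonneg (by positivity) (Complex.nonneg_iff.mp (hρ.1.trace_mul_nonneg hρ.1.spinFlip)).1

end Sector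

theorem Fin.sum_univ_pi_succ {n : ℕ} {α M : Type*} [Fintype α] [AddCommMonoid M]
    (f : (Fin (n + 1) → α) → M) :
    ∑ w, f w = ∑ a, ∑ w : Fin n → α, f (vecCons a w) := by
  rw [← (Fin.consEquiv fun _ => α).sum_comp, Fintype.sum_prod_type]
  rfl

theorem wt_vecCons {n : ℕ} (a : Fin 4) (w : Fin n → Fin 4) :
    wt (vecCons a w) = (if a = 0 then 0 else 1) + wt w := by
  rw [wt, Fin.card_filter_univ_succ']
  simp only [ne_eq, ite_not]
  rfl

theorem wt_of_fin_zero (w : Fin 0 → Fin 4) : wt w = 0 :=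
  rfl

theorem pWord_vecCons_apply_const {n : ℕ} (a : Fin 4) (w : Fin n → Fin 4) (i j : Fin 2) :
    pWord (vecCons a w) (fun _ => i) (fun _ => j) =
      pauli a i j * pWord w (fun _ => i) (fun _ => j) :=
  Fin.prod_univ_succ _

theorem pWord_of_fin_zero (w : Fin 0 → Fin 4) (x y : Fin 0 → Fin 2) : pWord w x y = 1 :=
  Fintype.prod_empty fun i => pauli (w i) (x i) (y i)

theorem trace_mul_outer {n : ℕ} (M : Matrix (Fin n → Fin 2) (Fin n → Fin 2) ℂ)
    (ψ : (Fin n → Fin 2) → ℂ) : (M * outer ψ).trace = star ψ ⬝ᵥ (M *ᵥ ψ) := by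
  simp only [trace, Matrix.diag, mul_apply, outer, of_apply, dotProduct, mulVec, mul_sum]
  refine sum_congr rfl fun x _ => sum_congr rfl fun y _ => ?_
  rw [Pi.star_apply, Complex.star_def]
  ring

theorem ghzVec_eq :
    ghzVec = (Real.sqrt 2 : ℂ)⁻¹ • (Pi.single (fun _ => 0) 1 + Pi.single (fun _ => 1) 1) := by
  have h01 : (fun _ => 1 : Fin 3 → Fin 2) ≠ fun _ => 0 := fun h => by simpa using congrFun h 0
  ext x
  by_cases h0 : x = fun _ => 0
  · subst h0; simp [ghzVec, h01.symm]
  by_cases h1 : x = fun _ => 1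
  · subst h1; simp [ghzVec, h01]
  simp [ghzVec, h0, h1]

theorem trace_mul_outer_ghzVec (M : Matrix (Fin 3 → Fin 2) (Fin 3 → Fin 2) ℂ) :
    (M * outer ghzVec).trace =
      (M (fun _ => 0) (fun _ => 0) + M (fun _ => 0) (fun _ => 1) + M (fun _ => 1) (fun _ => 0) +
        M (fun _ => 1) (fun _ => 1)) / 2 := by
  have hc : (Real.sqrt 2 : ℂ)⁻¹ * star (Real.sqrt 2 : ℂ)⁻¹ = 1 / 2 := by
    rw [star_inv₀, Complex.star_def, Complex.conj_ofReal, ← mul_inv, ← Complex.ofReal_mul,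
      Real.mul_self_sqrt zero_le_two]
    norm_num
  rw [trace_mul_outer, ghzVec_eq, star_smul, mulVec_smul, dotProduct_smul, smul_dotProduct,
    smul_smul, hc]
  simp only [one_div, star_add, Pi.star_single, star_one, mulVec_add, mulVec_single,
    MulOpposite.op_one, one_smul, dotProduct_add, add_dotProduct, single_dotProduct, col_apply,
    one_mul, smul_eq_mul]
  ring

theorem sector_three_three_outer_ghzVec : sector 3 3 (outer ghzVec) = 4 := by
  simp only [sector, sum_filter, trace_mul_outer_ghzVec, Fin.sum_univ_pi_succ,
    Fin.sum_univ_four, wt_vecCons, wt_of_fin_zero, pWord_vecCons_apply_const, pWord_of_fin_zero]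
  norm_num [pauli, Fin.ext_iff]

/-- Every 3-qubit state satisfies `A₃(ρ) ≤ 4`, with equality attained by
the GHZ state `(|000⟩ + |111⟩)/√2`. -/
theorem three_qubit_A3_le_four :
    (∀ ρ : Matrix (Fin 3 → Fin 2) (Fin 3 → Fin 2) ℂ,
      IsState ρ → sector 3 3 ρ ≤ 4) ∧
    sector 3 3 (outer ghzVec) = 4 := by
  refine ⟨fun ρ hρ => ?_, sector_three_three_outer_ghzVec⟩
  have purity := hρ.sum_range_sector_le
  have inversion := hρ.sum_range_neg_one_pow_mul_sector_nonneg
  simp only [sum_range_succ, sum_range_zero, sector_zero hρ.2] at purity inversion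
  norm_num at purity inversion
  linarith [sector_nonneg 1 ρ]
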